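/- Let a : ℝ → ℝ be continuous, 1-periodic, and strictly positive. Then the coefficient C₉ = ⟨a·[[a⁻¹·[[a]]]]⟩ satisfies C₉ = −⟨a⁻¹·[[a]]²⟩ ≤ 0; moreover, if a is not constant then C₉ < 0. -/

import Mathlib

open MeasureTheory Matrix

/-- The mean of a function over one period: `⟨b⟩ = ∫₀¹ b(y) dy`. -/
noncomputable def pmean (b : ℝ → ℝ) : ℝ := ∫ y in (0:ℝ)..1, b y

/-- The fluctuating (mean-zero) part: `{b} = b − ⟨b⟩`. -/
noncomputable def pfluct (b : ℝ → ℝ) : ℝ → ℝ := fun y => b y - pmean b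

/-- The mean-zero primitive of the fluctuating part:
`[[b]](y) = ∫₀^y {b}(ξ) dξ − ∫₀¹ (∫₀^s {b}(ξ) dξ) ds`. -/
noncomputable def pbracket (b : ℝ → ℝ) : ℝ → ℝ :=
  fun y => (∫ ξ in (0:ℝ)..y, pfluct b ξ) - ∫ s in (0:ℝ)..1, (∫ ξ in (0:ℝ)..s, pfluct b ξ)

/-!
Write `F = [[a]]` and `G = [[a⁻¹ F]]`, so that `F' = {a}` and `G' = {a⁻¹ F}`. Since `G` has mean
zero, `⟨a G⟩ = ⟨{a} G⟩ = ⟨F' G⟩`; integrating by parts (both primitives take equal values at `0`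
and `1`) gives `−⟨F {a⁻¹ F}⟩`, and since `F` has mean zero this is `−⟨a⁻¹ F²⟩ ≤ 0`. If it vanished,
the continuous nonnegative integrand would force `F = 0` on `[0, 1]`, hence `{a} = F' = 0` there,
and `a` would be constant by periodicity.
-/

open Set intervalIntegral

section Bracket

variable {b c : ℝ → ℝ}

lemma continuous_pfluct (hb : Continuous b) : Continuous (pfluct b) :=
  hb.sub continuous_const

lemma hasDerivAt_pbracket (hb : Continuous b) (y : ℝ) :
    HasDerivAt (pbracket b) (pfluct b y) y :=
  ((continuous_pfluct hb).integral_hasStrictDerivAt 0 y).hasDerivAt.sub_const _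

lemma continuous_pbracket (hb : Continuous b) : Continuous (pbracket b) :=
  continuous_iff_continuousAt.2 fun y => (hasDerivAt_pbracket hb y).continuousAt

lemma pmean_pfluct (hb : Continuous b) : pmean (pfluct b) = 0 := by
  simp only [pmean, pfluct]
  rw [integral_sub (hb.intervalIntegrable _ _) intervalIntegrable_const]
  simp

lemma pbracket_one (hb : Continuous b) : pbracket b 1 = pbracket b 0 := by
  have h : ∫ ξ in (0:ℝ)..1, pfluct b ξ = 0 := pmean_pfluct hb
  simp [pbracket, h]

lemma pmean_pbracket (hb : Continuous b) : pmean (pbracket b) = 0 := by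
  have hprim : Continuous fun s => ∫ ξ in (0:ℝ)..s, pfluct b ξ :=
    continuous_primitive (fun _ _ => (continuous_pfluct hb).intervalIntegrable _ _) 0
  simp only [pmean, pbracket]
  rw [integral_sub (hprim.intervalIntegrable _ _) intervalIntegrable_const]
  simp

lemma pmean_pfluct_mul (hb : Continuous b) (hc : Continuous c) (hc₀ : pmean c = 0) :
    pmean (fun y => pfluct b y * c y) = pmean (fun y => b y * c y) := by
  have hsplit : ∀ y, pfluct b y * c y = b y * c y - pmean b * c y := fun y => by
    simp only [pfluct]; ring
  simp only [pmean] at hc₀ ⊢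
  rw [funext hsplit, integral_sub (f := fun y => b y * c y) (g := fun y => pmean b * c y)
    ((hb.mul hc).intervalIntegrable _ _) ((continuous_const.mul hc).intervalIntegrable _ _), intervalIntegral.integral_const_mul, hc₀, mul_zero,
    sub_zero]

lemma pmean_pbracket_mul_pfluct (hb : Continuous b) (hc : Continuous c) :
    pmean (fun y => pbracket b y * pfluct c y) = - pmean (fun y => pfluct b y * pbracket c y) := by
  rw [pmean, integral_mul_deriv_eq_deriv_mul (fun x _ => hasDerivAt_pbracket hb x)
    (fun x _ => hasDerivAt_pbracket hc x) ((continuous_pfluct hb).intervalIntegrable _ _)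
    ((continuous_pfluct hc).intervalIntegrable _ _), pbracket_one hb, pbracket_one hc, pmean]
  ring

theorem pmean_mul_pbracket_mul_pbracket (hb : Continuous b) (hc : Continuous c) :
    pmean (fun y => b y * pbracket (fun z => c z * pbracket b z) y)
      = - pmean (fun y => c y * pbracket b y ^ 2) := by
  have hcF : Continuous fun z => c z * pbracket b z := hc.mul (continuous_pbracket hb)
  calc pmean (fun y => b y * pbracket (fun z => c z * pbracket b z) y)
      = pmean (fun y => pfluct b y * pbracket (fun z => c z * pbracket b z) y) :=
        (pmean_pfluct_mul hb (continuous_pbracket hcF) (pmean_pbracket hcF)).symm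
    _ = - pmean (fun y => pfluct (fun z => c z * pbracket b z) y * pbracket b y) := by
        rw [← neg_eq_iff_eq_neg, ← pmean_pbracket_mul_pfluct hb hcF]
        simp only [mul_comm]
    _ = - pmean (fun y => c y * pbracket b y ^ 2) := by
        rw [pmean_pfluct_mul hcF (continuous_pbracket hb) (pmean_pbracket hb)]
        simp only [sq, mul_assoc]

lemma pfluct_eqOn_zero_of_pbracket_eqOn_zero (hb : Continuous b)
    (h : EqOn (pbracket b) 0 (Icc 0 1)) : EqOn (pfluct b) 0 (Icc 0 1) := fun z hz =>
  (uniqueDiffOn_Icc zero_lt_one z hz).eq_deriv _ (hasDerivAt_pbracket hb z).hasDerivWithinAt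
    ((hasDerivWithinAt_const z _ (0 : ℝ)).congr h (h hz))

lemma exists_pbracket_ne_zero (hb : Continuous b) (hper : Function.Periodic b 1)
    (hnc : ∃ x y, b x ≠ b y) : ∃ z ∈ Icc (0:ℝ) 1, pbracket b z ≠ 0 := by
  by_contra! h
  have hconst : ∀ x, b x = pmean b := fun x => by
    obtain ⟨y, hy, hxy⟩ := hper.exists_mem_Ico₀ zero_lt_one x
    have := pfluct_eqOn_zero_of_pbracket_eqOn_zero hb h (Ico_subset_Icc_self hy)
    rw [hxy, ← sub_eq_zero]
    exact this
  obtain ⟨x, y, hxy⟩ := hnc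
  exact hxy ((hconst x).trans (hconst y).symm)

end Bracket

/-- For `a` continuous, 1-periodic and strictly positive, the coefficient
`C₉ = ⟨a·[[a⁻¹·[[a]]]]⟩` satisfies `C₉ = −⟨a⁻¹·[[a]]²⟩ ≤ 0`, with strict inequality
if `a` is not constant. -/
theorem statement11 (a : ℝ → ℝ) (ha : Continuous a) (hper : Function.Periodic a 1)
    (hpos : ∀ y, 0 < a y)
    (C₉ : ℝ)
    (hC9 : C₉ = pmean (fun y => a y * pbracket (fun z => (a z)⁻¹ * pbracket a z) y)) :
    C₉ = - pmean (fun y => (a y)⁻¹ * (pbracket a y)^2) ∧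
    C₉ ≤ 0 ∧
    ((∃ x y, a x ≠ a y) → C₉ < 0) := by
  have hainv : Continuous fun z => (a z)⁻¹ := ha.inv₀ fun z => (hpos z).ne'
  have hC9' : C₉ = - pmean (fun y => (a y)⁻¹ * (pbracket a y)^2) :=
    hC9.trans (pmean_mul_pbracket_mul_pbracket ha hainv)
  have hnonneg : ∀ y, 0 ≤ (a y)⁻¹ * (pbracket a y)^2 := fun y => by
    have := hpos y
    positivity
  refine ⟨hC9', ?_, fun hnc => ?_⟩
  · rw [hC9', neg_nonpos]
    exact integral_nonneg zero_le_one fun y _ => hnonneg y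
  · obtain ⟨z, hz, hFz⟩ := exists_pbracket_ne_zero ha hper hnc
    rw [hC9', neg_lt_zero]
    refine integral_pos zero_lt_one (hainv.mul ((continuous_pbracket ha).pow 2)).continuousOn
      (fun y _ => hnonneg y) ⟨z, hz, ?_⟩
    have := hpos z
    positivity
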